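/- Let H be a connected r-uniform hypergraph (r ≥ 2) with spectral radius ρ and principal eigenvector x. If u, v are vertices at hypergraph distance d(u,v) = ℓ, then ρ^{−ℓ} ≤ x_u/x_v ≤ ρ^{ℓ}. In particular the principal ratio γ(H) = x_max/x_min satisfies γ(H) ≤ ρ^{D}, where D is the diameter of H. -/

import Mathlib

/-- `hconn E k u v` : there is a walk of length `k` from `u` to `v` in the hypergraph
with edge set `E`, i.e. an alternating sequence of vertices and edges where consecutive
vertices both lie in the connecting edge. -/
def hconn {n : ℕ} (E : Finset (Finset (Fin n))) : ℕ → Fin n → Fin n → Prop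
  | 0, u, v => u = v
  | k + 1, u, v => ∃ e ∈ E, ∃ w ∈ e, u ∈ e ∧ hconn E k w v

/-- Distance between two vertices of a hypergraph: minimum length of a connecting walk. -/
noncomputable def hdist {n : ℕ} (E : Finset (Finset (Fin n))) (u v : Fin n) : ℕ :=
  sInf {k | hconn E k u v}

/-- Diameter of a hypergraph: maximum distance between two vertices. -/
noncomputable def hdiam {n : ℕ} (E : Finset (Finset (Fin n))) : ℕ :=
  sSup {d | ∃ u v : Fin n, hdist E u v = d}

/-- A hypergraph is connected if any two vertices are joined by a walk. -/
def HConnected {n : ℕ} (E : Finset (Finset (Fin n))) : Prop :=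
  ∀ u v : Fin n, ∃ k, hconn E k u v

/-- Degree of a vertex: the number of edges containing it. -/
def hdeg {n : ℕ} (E : Finset (Finset (Fin n))) (v : Fin n) : ℕ :=
  (E.filter (fun e => v ∈ e)).card

/-- The eigenvalue equation `A(H) x^{r-1} = ρ x^{[r-1]}` for the adjacency tensor of an
`r`-uniform hypergraph with edge set `E`: the `i`-th entry of `A(H) x^{r-1}` equals
`∑_{e ∋ i} ∏_{j ∈ e \ {i}} x_j`. -/
def EigenEq {n : ℕ} (E : Finset (Finset (Fin n))) (r : ℕ) (ρ : ℝ) (x : Fin n → ℝ) : Prop :=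
  ∀ i : Fin n, ∑ e ∈ E.filter (fun e => i ∈ e), ∏ j ∈ e.erase i, x j = ρ * x i ^ (r - 1)

/-!
Along an edge `e ∋ u, v` the eigenvector entries differ by at most a factor `ρ`. Indeed,
the eigen-equation at `j ∈ e` bounds the single term of edge `e`:
`P := ∏_{k ∈ e} x_k ≤ ρ x_j^r`. Multiplying these bounds over the `r - 1` vertices `j ≠ u`
of `e` gives `P^{r-1} ≤ ρ^{r-1} (P / x_u)^r`, i.e. `x_u^r ≤ ρ^{r-1} P ≤ ρ^r x_v^r`.
Iterating along a shortest walk gives the factor `ρ^ℓ`; since any edge forces `ρ ≥ 1`,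
the diameter bound follows.
-/

open Finset

section Walks

variable {n : ℕ} {E : Finset (Finset (Fin n))}

theorem hconn.le_pow_mul_and_le_pow_mul {f : Fin n → ℝ} {c : ℝ} (hc : 0 ≤ c)
    (hf : ∀ e ∈ E, ∀ a ∈ e, ∀ b ∈ e, f a ≤ c * f b) :
    ∀ {k : ℕ} {u v : Fin n}, hconn E k u v → f u ≤ c ^ k * f v ∧ f v ≤ c ^ k * f u
  | 0, u, v, (huv : u = v) => by simp [huv]
  | k + 1, u, v, ⟨e, he, w, hw, hu, hwv⟩ => by
    obtain ⟨hwv₁, hwv₂⟩ := hconn.le_pow_mul_and_le_pow_mul hc hf hwv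
    constructor
    · calc f u ≤ c * f w := hf e he u hu w hw
        _ ≤ c * (c ^ k * f v) := mul_le_mul_of_nonneg_left hwv₁ hc
        _ = c ^ (k + 1) * f v := by ring
    · calc f v ≤ c ^ k * f w := hwv₂
        _ ≤ c ^ k * (c * f u) := mul_le_mul_of_nonneg_left (hf e he w hw u hu) (pow_nonneg hc k)
        _ = c ^ (k + 1) * f u := by ring

theorem hconn_hdist (hc : HConnected E) (u v : Fin n) : hconn E (hdist E u v) u v :=
  Nat.sInf_mem (hc u v)

theorem hdist_le_hdiam (E : Finset (Finset (Fin n))) (u v : Fin n) : hdist E u v ≤ hdiam E := by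
  have hfin : {d | ∃ u v : Fin n, hdist E u v = d}.Finite :=
    (Set.finite_range fun p : Fin n × Fin n => hdist E p.1 p.2).subset
      (by rintro _ ⟨a, b, rfl⟩; exact ⟨(a, b), rfl⟩)
  exact le_csSup hfin.bddAbove ⟨u, v, rfl⟩

theorem hconn_empty_iff {k : ℕ} {u v : Fin n} :
    hconn (∅ : Finset (Finset (Fin n))) k u v ↔ k = 0 ∧ u = v := by
  cases k with
  | zero => exact ⟨fun h => ⟨rfl, h⟩, fun h => h.2⟩
  | succ k => simp [hconn]

theorem hdiam_empty : hdiam (∅ : Finset (Finset (Fin n))) = 0 := by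
  refine Nat.le_zero.mp (csSup_le' ?_)
  rintro _ ⟨u, v, rfl⟩
  refine (Nat.sInf_eq_zero.mpr ?_).le
  by_cases huv : u = v
  · exact Or.inl (hconn_empty_iff.mpr ⟨rfl, huv⟩)
  · exact Or.inr (Set.eq_empty_of_forall_notMem fun k hk => huv (hconn_empty_iff.mp hk).2)

end Walks

namespace EigenEq

variable {n r : ℕ} {E : Finset (Finset (Fin n))} {ρ : ℝ} {x : Fin n → ℝ}
  {e : Finset (Fin n)} {u v : Fin n}

theorem eigenvalue_nonneg (heig : EigenEq E r ρ x) (hx : ∀ i, 0 < x i) (i : Fin n) :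
    0 ≤ ρ := by
  refine nonneg_of_mul_nonneg_left ?_ (pow_pos (hx i) (r - 1))
  rw [← heig i]
  exact sum_nonneg fun e _ => prod_nonneg fun k _ => (hx k).le

theorem prod_le (heig : EigenEq E r ρ x) (hr : 1 ≤ r) (hx : ∀ i, 0 ≤ x i) (he : e ∈ E)
    (hu : u ∈ e) : ∏ k ∈ e, x k ≤ ρ * x u ^ r := by
  obtain ⟨m, rfl⟩ : ∃ m, r = m + 1 := ⟨r - 1, by omega⟩
  have hterm : ∏ k ∈ e.erase u, x k ≤ ρ * x u ^ m := by
    rw [← Nat.add_sub_cancel m 1, ← heig u]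
    exact single_le_sum (f := fun s => ∏ k ∈ s.erase u, x k)
      (fun s _ => prod_nonneg fun k _ => hx k)
      (mem_filter.mpr ⟨he, hu⟩ : e ∈ E.filter (u ∈ ·))
  calc ∏ k ∈ e, x k = (∏ k ∈ e.erase u, x k) * x u := by
        rw [mul_comm, mul_prod_erase e x hu]
    _ ≤ ρ * x u ^ m * x u := mul_le_mul_of_nonneg_right hterm (hx u)
    _ = ρ * x u ^ (m + 1) := by ring

theorem pow_le_pow_pred_mul_prod (heig : EigenEq E r ρ x) (hr : 1 ≤ r) (hx : ∀ i, 0 < x i)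
    (hcard : e.card = r) (he : e ∈ E) (hu : u ∈ e) :
    x u ^ r ≤ ρ ^ (r - 1) * ∏ k ∈ e, x k := by
  obtain ⟨m, rfl⟩ : ∃ m, r = m + 1 := ⟨r - 1, by omega⟩
  rw [Nat.add_sub_cancel]
  set P := ∏ k ∈ e, x k
  set Q := ∏ k ∈ e.erase u, x k
  have hP : 0 < P := prod_pos fun k _ => hx k
  have hPQ : P = x u * Q := (mul_prod_erase e x hu).symm
  have hcard' : (e.erase u).card = m := by rw [card_erase_of_mem hu, hcard, Nat.add_sub_cancel]
  have hPm : P ^ m ≤ ρ ^ m * Q ^ (m + 1) :=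
    calc P ^ m = ∏ _j ∈ e.erase u, P := by rw [prod_const, hcard']
      _ ≤ ∏ j ∈ e.erase u, ρ * x j ^ (m + 1) :=
          prod_le_prod (fun _ _ => hP.le)
            fun j hj => heig.prod_le hr (fun i => (hx i).le) he (mem_of_mem_erase hj)
      _ = ρ ^ m * Q ^ (m + 1) := by rw [prod_mul_distrib, prod_const, hcard', prod_pow]
  refine le_of_mul_le_mul_right ?_ (pow_pos hP m)
  calc x u ^ (m + 1) * P ^ m ≤ x u ^ (m + 1) * (ρ ^ m * Q ^ (m + 1)) :=
        mul_le_mul_of_nonneg_left hPm (pow_pos (hx u) _).le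
    _ = ρ ^ m * P * P ^ m := by rw [hPQ]; ring

theorem le_mul_of_mem (heig : EigenEq E r ρ x) (hr : 1 ≤ r) (hx : ∀ i, 0 < x i)
    (hcard : e.card = r) (he : e ∈ E) (hu : u ∈ e) (hv : v ∈ e) : x u ≤ ρ * x v := by
  have hρ : 0 ≤ ρ := heig.eigenvalue_nonneg hx u
  refine le_of_pow_le_pow_left₀ (by omega : r ≠ 0) (mul_nonneg hρ (hx v).le) ?_
  calc x u ^ r ≤ ρ ^ (r - 1) * ∏ k ∈ e, x k :=
        heig.pow_le_pow_pred_mul_prod hr hx hcard he hu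
    _ ≤ ρ ^ (r - 1) * (ρ * x v ^ r) :=
        mul_le_mul_of_nonneg_left (heig.prod_le hr (fun i => (hx i).le) he hv) (pow_nonneg hρ _)
    _ = (ρ * x v) ^ r := by rw [mul_pow, ← mul_assoc, ← pow_succ, Nat.sub_add_cancel hr]

theorem one_le_eigenvalue (heig : EigenEq E r ρ x) (hr : 1 ≤ r) (hx : ∀ i, 0 < x i)
    (hcard : e.card = r) (he : e ∈ E) : 1 ≤ ρ := by
  obtain ⟨j, hj, hmin⟩ := e.exists_min_image x (card_pos.mp (by omega))
  refine le_of_mul_le_mul_right ?_ (pow_pos (hx j) r)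
  calc 1 * x j ^ r = ∏ _k ∈ e, x j := by rw [one_mul, prod_const, hcard]
    _ ≤ ∏ k ∈ e, x k := prod_le_prod (fun _ _ => (hx j).le) hmin
    _ ≤ ρ * x j ^ r := heig.prod_le hr (fun i => (hx i).le) he hj

theorem le_pow_hdist_mul_and_le_pow_hdist_mul (heig : EigenEq E r ρ x) (hr : 1 ≤ r)
    (hx : ∀ i, 0 < x i) (hu : ∀ e ∈ E, e.card = r) (hc : HConnected E) (u v : Fin n) :
    x u ≤ ρ ^ hdist E u v * x v ∧ x v ≤ ρ ^ hdist E u v * x u :=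
  (hconn_hdist hc u v).le_pow_mul_and_le_pow_mul (heig.eigenvalue_nonneg hx u)
    fun e he _ ha _ hb => heig.le_mul_of_mem hr hx (hu e he) he ha hb

end EigenEq

theorem stmt_15_general (n r : ℕ) (hr : 2 ≤ r) (hn : 0 < n) (E : Finset (Finset (Fin n)))
    (hu : ∀ e ∈ E, e.card = r) (hc : HConnected E)
    (ρ : ℝ) (x : Fin n → ℝ) (hx : ∀ i, 0 < x i)
    (heig : EigenEq E r ρ x) (D : ℕ) (hD : hdiam E = D) :
    (∀ u v : Fin n, ∀ ℓ : ℕ, hdist E u v = ℓ →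
      (ρ ^ ℓ)⁻¹ ≤ x u / x v ∧ x u / x v ≤ ρ ^ ℓ) ∧
    Finset.univ.sup' ⟨⟨0, hn⟩, Finset.mem_univ _⟩ x /
        Finset.univ.inf' ⟨⟨0, hn⟩, Finset.mem_univ _⟩ x ≤ ρ ^ D := by
  have hratio (u v : Fin n) :
      (ρ ^ hdist E u v)⁻¹ ≤ x u / x v ∧ x u / x v ≤ ρ ^ hdist E u v := by
    obtain ⟨huv, hvu⟩ := heig.le_pow_hdist_mul_and_le_pow_hdist_mul (by omega) hx hu hc u v
    refine ⟨?_, (div_le_iff₀ (hx v)).mpr huv⟩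
    simpa only [inv_div] using inv_anti₀ (div_pos (hx v) (hx u)) ((div_le_iff₀ (hx u)).mpr hvu)
  refine ⟨fun u v ℓ hℓ => hℓ ▸ hratio u v, ?_⟩
  obtain ⟨u, -, hsup⟩ := exists_mem_eq_sup' ⟨⟨0, hn⟩, mem_univ _⟩ x
  obtain ⟨v, -, hinf⟩ := exists_mem_eq_inf' ⟨⟨0, hn⟩, mem_univ _⟩ x
  rw [hsup, hinf]
  refine (hratio u v).2.trans ?_
  subst hD
  rcases E.eq_empty_or_nonempty with rfl | ⟨e, he⟩
  · have h0 := hdist_le_hdiam (∅ : Finset (Finset (Fin n))) u v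
    rw [hdiam_empty, Nat.le_zero] at h0
    rw [h0, hdiam_empty]
  · exact pow_le_pow_right₀ (heig.one_le_eigenvalue (by omega) hx (hu e he) he)
      (hdist_le_hdiam E u v)

theorem stmt_15 (n r : ℕ) (hr : 2 ≤ r) (hn : 0 < n) (E : Finset (Finset (Fin n)))
    (hu : ∀ e ∈ E, e.card = r) (hc : HConnected E)
    (ρ : ℝ) (x : Fin n → ℝ) (hx : ∀ i, 0 < x i) (hnorm : ∑ i, x i ^ r = 1)
    (heig : EigenEq E r ρ x) (D : ℕ) (hD : hdiam E = D) :
    (∀ u v : Fin n, ∀ ℓ : ℕ, hdist E u v = ℓ →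
      (ρ ^ ℓ)⁻¹ ≤ x u / x v ∧ x u / x v ≤ ρ ^ ℓ) ∧
    Finset.univ.sup' ⟨⟨0, hn⟩, Finset.mem_univ _⟩ x /
        Finset.univ.inf' ⟨⟨0, hn⟩, Finset.mem_univ _⟩ x ≤ ρ ^ D :=
  stmt_15_general n r hr hn E hu hc ρ x hx heig D hD
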